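/- arXiv:math/0305182 — 2 statements merged into one kernel-verified Lean document; each statement's English description precedes it below -/
import Mathlib

section
/- Let G be a group acting on an abelian group A, H ⊴ G a normal subgroup acting trivially on A, and f : H → A a surjective G-equivariant homomorphism. If A_{G/H} = 0 (the coinvariants of A under the induced G/H-action vanish) and ker f is perfect, then every element ξ ∈ H equals a product of commutators of elements of G, i.e., H ⊆ [G,G]. -/
open scoped commutatorElement

/-! A commutator `⁅g, h⁆ = (g h g⁻¹) h⁻¹` with `h ∈ H` lies in `H ∩ [G, G]`, and by equivariance
`f ⁅g, h⁆ = g • f h - f h`. So the image of `H ∩ [G, G]` under `f` contains the generators of the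
augmentation subgroup of `A`, which is all of `A` since the coinvariants vanish. As `ker f` is
perfect it also lies in `[G, G]`, and a subgroup of `H` containing `ker f` and mapping onto `A` is
all of `H`. -/

theorem Subgroup.eq_top_of_map_eq_top_of_ker_le {K Q : Type*} [Group K] [Group Q] (φ : K →* Q)
    {S : Subgroup K} (hmap : S.map φ = ⊤) (hker : φ.ker ≤ S) : S = ⊤ := by
  rw [← sup_eq_left.mpr hker, ← Subgroup.comap_map_eq, hmap, Subgroup.comap_top]

theorem MonoidHom.commutator_le_comap_commutator {K G : Type*} [Group K] [Group G] (ψ : K →* G) :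
    commutator K ≤ (commutator G).comap ψ := by
  rw [← Subgroup.map_le_iff_le_comap, commutator, Subgroup.map_commutator]
  exact Subgroup.commutator_mono le_top le_top

theorem Subgroup.Normal.commutatorElement_mem {G : Type*} [Group G] {H : Subgroup G}
    (hH : H.Normal) (g : G) {h : G} (hh : h ∈ H) : ⁅g, h⁆ ∈ H := by
  rw [commutatorElement_def]
  exact mul_mem (hH.conj_mem h hh g) (inv_mem hh)

theorem apply_commutatorElement_eq_smul_sub {G A : Type*} [Group G] [AddCommGroup A]
    [DistribMulAction G A] {H : Subgroup G} (hH : H.Normal) {f : H → A}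
    (hfmul : ∀ x y : H, f (x * y) = f x + f y)
    (hequiv : ∀ (g : G) (h m : H), (m : G) = g * h * g⁻¹ → f m = g • f h) (g : G) (h : H) :
    f ⟨⁅g, h⁆, hH.commutatorElement_mem g h.2⟩ = g • f h - f h := by
  let conj : H := ⟨g * h * g⁻¹, hH.conj_mem h h.2 g⟩
  have hsplit : (⟨⁅g, h⁆, hH.commutatorElement_mem g h.2⟩ : H) * h = conj := by
    ext; simp [conj, commutatorElement_def]
  rw [eq_sub_iff_add_eq, ← hfmul, hsplit]
  exact hequiv g h conj rfl

theorem subgroup_le_commutator_of_coinvariants_vanish_general {G A : Type*} [Group G]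
    [AddCommGroup A] [DistribMulAction G A] (H : Subgroup G) (hH : H.Normal)
    (f : H → A) (hfmul : ∀ x y : H, f (x * y) = f x + f y)
    (hfsurj : Function.Surjective f)
    (hequiv : ∀ (g : G) (h m : H), (m : G) = g * h * g⁻¹ → f m = g • f h)
    (hcoinv : AddSubgroup.closure {x : A | ∃ (g : G) (a : A), x = g • a - a} = ⊤)
    (hker : ∀ h : H, f h = 0 → h ∈ Subgroup.closure
      {x : H | ∃ a b : H, f a = 0 ∧ f b = 0 ∧ x = ⁅a, b⁆}) :
    ∀ ξ ∈ H, ξ ∈ commutator G := by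
  let φ : H →* Multiplicative A := MonoidHom.mk' (fun h ↦ .ofAdd (f h)) hfmul
  let S : Subgroup H := (commutator G).comap H.subtype
  have hmap : S.map φ = ⊤ := by
    rw [← map_eq_top_iff Subgroup.toAddSubgroup', eq_top_iff, ← hcoinv, AddSubgroup.closure_le]
    rintro _ ⟨g, a, rfl⟩
    obtain ⟨h, rfl⟩ := hfsurj a
    exact ⟨_, Subgroup.commutator_mem_commutator (Subgroup.mem_top g) (Subgroup.mem_top h.1),
      apply_commutatorElement_eq_smul_sub hH hfmul hequiv g h⟩
  have hkerS : φ.ker ≤ S := by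
    refine le_trans (fun h hh ↦ ?_) H.subtype.commutator_le_comap_commutator
    refine (Subgroup.closure_le _).mpr ?_ (hker h hh)
    rintro _ ⟨a, b, -, -, rfl⟩
    exact Subgroup.commutator_mem_commutator (Subgroup.mem_top a) (Subgroup.mem_top b)
  intro ξ hξ
  exact (Subgroup.eq_top_of_map_eq_top_of_ker_le φ hmap hkerS).ge (Subgroup.mem_top ⟨ξ, hξ⟩)

/-- Let `G` act on an abelian group `A`, `H ⊴ G` a normal subgroup acting trivially on
`A`, and `f : H → A` a surjective `G`-equivariant homomorphism. If the coinvariants of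
`A` under the induced `G/H`-action vanish (equivalently, the subgroup of `A` generated
by elements `g • a - a` is all of `A`), and `ker f` is perfect, then every element of
`H` is a product of commutators of elements of `G`, i.e. `H ⊆ [G,G]`. -/
theorem subgroup_le_commutator_of_coinvariants_vanish {G A : Type*} [Group G]
    [AddCommGroup A] [DistribMulAction G A] (H : Subgroup G) (hH : H.Normal)
    (htriv : ∀ h ∈ H, ∀ a : A, h • a = a)
    (f : H → A) (hfmul : ∀ x y : H, f (x * y) = f x + f y)
    (hfsurj : Function.Surjective f)
    (hequiv : ∀ (g : G) (h m : H), (m : G) = g * h * g⁻¹ → f m = g • f h)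
    (hcoinv : AddSubgroup.closure {x : A | ∃ (g : G) (a : A), x = g • a - a} = ⊤)
    (hker : ∀ h : H, f h = 0 → h ∈ Subgroup.closure
      {x : H | ∃ a b : H, f a = 0 ∧ f b = 0 ∧ x = ⁅a, b⁆}) :
    ∀ ξ ∈ H, ξ ∈ commutator G :=
  subgroup_le_commutator_of_coinvariants_vanish_general H hH f hfmul hfsurj hequiv hcoinv hker
end

section
/- Let G be a group with a surjective homomorphism Φ : G → H onto the Heisenberg group H = ℝ ×_c V (c nondegenerate alternating on V, dim V ≥ 2) such that ker Φ is perfect. Then the map G → V (composition of Φ with projection) induces an isomorphism H₁(G;ℤ) ≅ V. -/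
/-!
The projection `q : G → V` is a homomorphism to an abelian group, so it kills `[G, G]`.
Conversely, in the Heisenberg group `⁅(s, u), (t, v)⁆ = (2 c(u, v), 0)`, and nondegeneracy of
`c` makes every central element `(t, 0)` such a commutator; hence `[H, H] = ker (H → V)`.
A surjective homomorphism maps `[G, G]` onto `[H, H]`, so `Φ⁻¹[H, H] = [G, G] · ker Φ`, and
`ker Φ ≤ [G, G]` because `ker Φ` is perfect.
-/

/-- The Heisenberg multiplication on `ℝ × V` twisted by a form `c`. -/
def heisenbergMul {V : Type*} [AddCommGroup V] (c : V → V → ℝ) :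
    (ℝ × V) → (ℝ × V) → (ℝ × V) :=
  fun x y => (x.1 + y.1 + c x.2 y.2, x.2 + y.2)

open scoped commutatorElement

theorem comap_commutator_eq_of_surjective {G H : Type*} [Group G] [Group H]
    {f : G →* H} (hf : Function.Surjective f) (hker : f.ker ≤ commutator G) :
    (commutator H).comap f = commutator G := by
  have hmap : (commutator G).map f = commutator H := by
    rw [map_commutator_eq, f.range_eq_top.mpr hf]
    rfl
  rw [← hmap, Subgroup.comap_map_eq, sup_eq_left.mpr hker]

theorem exists_apply_eq_of_nondegenerate {K V : Type*} [DivisionRing K] [AddCommMonoid V]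
    [Module K V] [Nontrivial V] {c : V → V → K}
    (hsmul_r : ∀ (a : K) (u v : V), c u (a • v) = a * c u v)
    (hnondeg : ∀ u : V, (∀ v : V, c u v = 0) → u = 0) (t : K) : ∃ u v, c u v = t := by
  obtain ⟨u, hu⟩ := exists_ne (0 : V)
  obtain ⟨w, hw⟩ : ∃ w, c u w ≠ 0 := by
    by_contra! h
    exact hu (hnondeg u h)
  exact ⟨u, (t / c u w) • w, by rw [hsmul_r, div_mul_cancel₀ t hw]⟩

theorem AddMonoidHom.apply_swap_eq_neg_of_alternating {V A : Type*} [AddCommGroup V]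
    [AddCommGroup A] {B : V →+ V →+ A} (halt : ∀ v, B v v = 0) (u v : V) :
    B v u = -B u v := by
  have h := halt (u + v)
  simp only [map_add, AddMonoidHom.add_apply, halt, zero_add, add_zero] at h
  exact eq_neg_of_add_eq_zero_left h

/-- The central extension `A ×_B V` of `V` by `A` with cocycle `B`; `ℝ ×_c V` is the case
`A = ℝ`, `B = c`. -/
@[ext]
structure HeisenbergGroup {A V : Type*} [AddCommGroup A] [AddCommGroup V]
    (B : V →+ V →+ A) where
  z : A
  v : V

namespace HeisenbergGroup

variable {A V : Type*} [AddCommGroup A] [AddCommGroup V] {B : V →+ V →+ A}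

instance : Mul (HeisenbergGroup B) := ⟨fun x y => ⟨x.z + y.z + B x.v y.v, x.v + y.v⟩⟩
instance : One (HeisenbergGroup B) := ⟨⟨0, 0⟩⟩
instance : Inv (HeisenbergGroup B) := ⟨fun x => ⟨-x.z + B x.v x.v, -x.v⟩⟩

@[simp] theorem mul_z (x y : HeisenbergGroup B) : (x * y).z = x.z + y.z + B x.v y.v := rfl
@[simp] theorem mul_v (x y : HeisenbergGroup B) : (x * y).v = x.v + y.v := rfl
@[simp] theorem one_z : (1 : HeisenbergGroup B).z = 0 := rfl
@[simp] theorem one_v : (1 : HeisenbergGroup B).v = 0 := rfl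
@[simp] theorem inv_z (x : HeisenbergGroup B) : x⁻¹.z = -x.z + B x.v x.v := rfl
@[simp] theorem inv_v (x : HeisenbergGroup B) : x⁻¹.v = -x.v := rfl

instance : Group (HeisenbergGroup B) where
  mul_assoc x y z := by ext <;> simp only [mul_z, mul_v, map_add, AddMonoidHom.add_apply] <;> abel
  one_mul x := by ext <;> simp
  mul_one x := by ext <;> simp
  inv_mul_cancel x := by ext <;> simp

theorem commutatorElement_eq (x y : HeisenbergGroup B) :
    ⁅x, y⁆ = ⟨B x.v y.v - B y.v x.v, 0⟩ := by
  ext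
  · simp only [commutatorElement_def, mul_z, mul_v, inv_z, inv_v, map_add, map_neg,
      AddMonoidHom.add_apply, AddMonoidHom.neg_apply]
    abel
  · simp only [commutatorElement_def, mul_v, inv_v]
    abel

variable (B) in
def vecHom : HeisenbergGroup B →* Multiplicative V where
  toFun x := Multiplicative.ofAdd x.v
  map_one' := rfl
  map_mul' _ _ := rfl

theorem commutator_eq_ker_vecHom (hB : ∀ t : A, ∃ u v, B u v - B v u = t) :
    commutator (HeisenbergGroup B) = (vecHom B).ker := by
  refine le_antisymm (Abelianization.commutator_subset_ker _) fun x hx => ?_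
  obtain ⟨u, v, huv⟩ := hB x.z
  have hx : ⁅(⟨0, u⟩ : HeisenbergGroup B), ⟨0, v⟩⁆ = x := by
    rw [commutatorElement_eq]
    exact HeisenbergGroup.ext huv hx.symm
  rw [← hx]
  exact Subgroup.commutator_mem_commutator (Subgroup.mem_top _) (Subgroup.mem_top _)

end HeisenbergGroup

theorem abelianization_iso_of_heisenberg_quotient_general {G V : Type*} [Group G]
    [AddCommGroup V] [Module ℝ V]
    (c : V → V → ℝ)
    (hadd_l : ∀ u u' v : V, c (u + u') v = c u v + c u' v)
    (hadd_r : ∀ u v v' : V, c u (v + v') = c u v + c u v')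
    (hsmul_r : ∀ (a : ℝ) (u v : V), c u (a • v) = a * c u v)
    (halt : ∀ v : V, c v v = 0)
    (hnondeg : ∀ u : V, (∀ v : V, c u v = 0) → u = 0)
    (hdim : 2 ≤ Module.rank ℝ V)
    (Φ : G → ℝ × V)
    (hΦmul : ∀ g h : G, Φ (g * h) = heisenbergMul c (Φ g) (Φ h))
    (hΦsurj : Function.Surjective Φ)
    (hker : ∀ g : G, Φ g = ((0 : ℝ), (0 : V)) → g ∈ Subgroup.closure
      {x : G | ∃ a b : G, Φ a = ((0 : ℝ), (0 : V)) ∧ Φ b = ((0 : ℝ), (0 : V)) ∧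
        x = ⁅a, b⁆}) :
    Function.Surjective (fun g : G => (Φ g).2) ∧
    (∀ g h : G, (Φ (g * h)).2 = (Φ g).2 + (Φ h).2) ∧
    (∀ g : G, (Φ g).2 = 0 ↔ g ∈ commutator G) := by
  let B : V →+ V →+ ℝ :=
    AddMonoidHom.mk' (fun u => AddMonoidHom.mk' (c u) (hadd_r u))
      fun u u' => AddMonoidHom.ext (hadd_l u u')
  let f : G →* HeisenbergGroup B :=
    MonoidHom.mk' (fun g => ⟨(Φ g).1, (Φ g).2⟩) fun g h => by rw [hΦmul]; rfl
  have hf : Function.Surjective f := fun x =>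
    (hΦsurj (x.z, x.v)).imp fun g hg => by simp [f, hg]
  have hkerf : f.ker ≤ commutator G := fun g hg => by
    refine (Subgroup.closure_le _).mpr ?_ (hker g ?_)
    · rintro _ ⟨a, b, -, -, rfl⟩
      exact Subgroup.commutator_mem_commutator (Subgroup.mem_top a) (Subgroup.mem_top b)
    · have hg1 : f g = 1 := hg
      exact Prod.ext (congrArg HeisenbergGroup.z hg1) (congrArg HeisenbergGroup.v hg1)
  have : Nontrivial V := rank_pos_iff_nontrivial.mp (lt_of_lt_of_le (by norm_num) hdim)
  have hB : ∀ t : ℝ, ∃ u v, B u v - B v u = t := fun t => by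
    obtain ⟨u, v, huv⟩ := exists_apply_eq_of_nondegenerate hsmul_r hnondeg (t / 2)
    refine ⟨u, v, ?_⟩
    rw [AddMonoidHom.apply_swap_eq_neg_of_alternating halt u v, sub_neg_eq_add]
    change c u v + c u v = t
    linarith
  refine ⟨fun v => (hΦsurj (0, v)).imp fun g hg => by simp [hg],
    fun g h => congrArg Prod.snd (hΦmul g h), fun g => ?_⟩
  rw [← comap_commutator_eq_of_surjective hf hkerf, HeisenbergGroup.commutator_eq_ker_vecHom hB]
  exact ofAdd_eq_one.symm

/-- Let `Φ : G → H = ℝ ×_c V` be a surjective homomorphism onto the Heisenberg group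
over a symplectic `ℝ`-vector space `(V, c)` (`c` nondegenerate alternating bilinear,
`dim V ≥ 2`) with perfect kernel. Then the composition `q = pr_V ∘ Φ : G → V` induces
an isomorphism `H₁(G;ℤ) ≅ V`: `q` is a surjective homomorphism to the additive group
`V` whose kernel is exactly the commutator subgroup `[G,G]`. -/
theorem abelianization_iso_of_heisenberg_quotient {G V : Type*} [Group G]
    [AddCommGroup V] [Module ℝ V]
    (c : V → V → ℝ)
    (hadd_l : ∀ u u' v : V, c (u + u') v = c u v + c u' v)
    (hadd_r : ∀ u v v' : V, c u (v + v') = c u v + c u v')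
    (hsmul_l : ∀ (a : ℝ) (u v : V), c (a • u) v = a * c u v)
    (hsmul_r : ∀ (a : ℝ) (u v : V), c u (a • v) = a * c u v)
    (halt : ∀ v : V, c v v = 0)
    (hnondeg : ∀ u : V, (∀ v : V, c u v = 0) → u = 0)
    (hdim : 2 ≤ Module.rank ℝ V)
    (Φ : G → ℝ × V)
    (hΦmul : ∀ g h : G, Φ (g * h) = heisenbergMul c (Φ g) (Φ h))
    (hΦsurj : Function.Surjective Φ)
    (hker : ∀ g : G, Φ g = ((0 : ℝ), (0 : V)) → g ∈ Subgroup.closure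
      {x : G | ∃ a b : G, Φ a = ((0 : ℝ), (0 : V)) ∧ Φ b = ((0 : ℝ), (0 : V)) ∧
        x = ⁅a, b⁆}) :
    Function.Surjective (fun g : G => (Φ g).2) ∧
    (∀ g h : G, (Φ (g * h)).2 = (Φ g).2 + (Φ h).2) ∧
    (∀ g : G, (Φ g).2 = 0 ↔ g ∈ commutator G) :=
  abelianization_iso_of_heisenberg_quotient_general c hadd_l hadd_r hsmul_r halt hnondeg hdim Φ
    hΦmul hΦsurj hker
end
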